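/- Let N ≥ 1 and let ν_1 < ν_2 < ⋯ < ν_N be distinct reals. Define the equal-time correlation kernel of the noncolliding Brownian motion with drift ν started from the origin by 𝐊_ν(t, x; t, y) = t ∑_{j=1}^N p(t, y|tν_j) ∫_ℝ dμ' p(t, −ix|tμ') ∏_{k≠j} (1 − (iμ'−ν_j)/(ν_k−ν_j)), where p is extended to complex arguments via the complex exponential. Then for every continuous compactly supported function f : ℝ → ℝ, lim_{t→∞} ∫_ℝ f(x) · t · 𝐊_ν(t, tx; t, tx) dx = ∑_{j=1}^N f(ν_j). (After dilatation by 1/t, the one-point correlation measure of the process converges vaguely, as t → ∞, to the drift configuration ∑_{j=1}^N δ_{ν_j}.) -/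

import Mathlib

open Finset Filter MeasureTheory

/-- Complex-argument Gaussian transition density
`p(t, z|w) = (2πt)^{-1/2} exp(-(z-w)²/(2t))`. -/
noncomputable def gaussC (t : ℝ) (z w : ℂ) : ℂ :=
  Complex.exp (-(z - w) ^ 2 / (2 * (t : ℂ))) / (Real.sqrt (2 * Real.pi * t) : ℂ)

/-- Equal-time correlation kernel of the noncolliding Brownian motion with
distinct drift coefficients ν started from the origin:
`𝐊_ν(t,x;t,y) = t ∑_j p(t,y|tν_j) ∫_ℝ dμ' p(t,−ix|tμ') ∏_{k≠j}(1−(iμ'−ν_j)/(ν_k−ν_j))`. -/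
noncomputable def Keq (N : ℕ) (ν : Fin N → ℝ) (t x y : ℝ) : ℂ :=
  (t : ℂ) * ∑ j, gaussC t (y : ℂ) ((t : ℂ) * (ν j : ℂ)) *
    ∫ μ' : ℝ,
      gaussC t (-Complex.I * (x : ℂ)) ((t : ℂ) * (μ' : ℂ)) *
        ∏ k ∈ Finset.univ.filter (fun k => k ≠ j),
          (1 - (Complex.I * (μ' : ℂ) - (ν j : ℂ)) / ((ν k : ℂ) - (ν j : ℂ)))

open Complex Real

noncomputable def gKer (t x μ : ℝ) : ℂ :=
  Complex.exp (-(-Complex.I * (x:ℂ) - (t:ℂ) * (μ:ℂ)) ^ 2 / (2 * (t:ℂ)))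

lemma gKer_num (t x μ : ℝ) :
    -(-Complex.I * (x:ℂ) - (t:ℂ) * (μ:ℂ)) ^ 2 =
      ((-(t:ℂ)/2) * (μ:ℂ)^2 + (-Complex.I * (x:ℂ)) * (μ:ℂ)) * (2*(t:ℂ)) + (x:ℂ)^2 := by
  linear_combination (-(x:ℂ)^2) * Complex.I_sq

lemma gKer_exponent (t x μ : ℝ) (ht : t ≠ 0) :
    -(-Complex.I * (x:ℂ) - (t:ℂ) * (μ:ℂ)) ^ 2 / (2 * (t:ℂ)) =
      (-(t:ℂ)/2) * (μ:ℂ)^2 + (-Complex.I * (x:ℂ)) * (μ:ℂ) + ((x^2/(2*t) : ℝ) : ℂ) := by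
  have ht' : (t:ℂ) ≠ 0 := Complex.ofReal_ne_zero.2 ht
  rw [gKer_num]
  push_cast
  field_simp

lemma gKer_exponent' (t x μ : ℝ) (ht : t ≠ 0) :
    -(-Complex.I * (x:ℂ) - (t:ℂ) * (μ:ℂ)) ^ 2 / (2 * (t:ℂ)) =
      ((x^2/(2*t) - t*μ^2/2 : ℝ) : ℂ) + Complex.I * ((-(x*μ) : ℝ) : ℂ) := by
  rw [gKer_exponent t x μ ht]
  push_cast
  have ht' : (t:ℂ) ≠ 0 := Complex.ofReal_ne_zero.2 ht
  field_simp
  ring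

lemma norm_gKer (t x μ : ℝ) (ht : t ≠ 0) :
    ‖gKer t x μ‖ = Real.exp (x^2/(2*t) - t*μ^2/2) := by
  rw [gKer, Complex.norm_exp, gKer_exponent' t x μ ht]
  simp only [Complex.add_re, Complex.ofReal_re, Complex.mul_re, Complex.I_re,
    Complex.I_im, Complex.ofReal_im]
  ring_nf

lemma continuous_gKer (t x : ℝ) : Continuous (fun μ => gKer t x μ) := by
  unfold gKer; fun_prop

lemma integrable_abs_pow_gauss {b : ℝ} (hb : 0 < b) (n : ℕ) :
    Integrable (fun μ : ℝ => |μ|^n * Real.exp (-b * μ^2)) := by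
  have h := (integrable_rpow_mul_exp_neg_mul_sq hb (s := (n:ℝ))
    (by linarith [Nat.cast_nonneg (α := ℝ) n])).abs
  refine h.congr (Filter.Eventually.of_forall fun μ => ?_)
  simp only [Real.rpow_natCast, abs_mul, abs_pow, Real.abs_exp]

lemma integrable_gKer_pow (t x : ℝ) (ht : 0 < t) (n : ℕ) :
    Integrable (fun μ : ℝ => gKer t x μ * (μ:ℂ)^n) := by
  refine Integrable.mono' (g := fun μ => Real.exp (x^2/(2*t)) * (|μ|^n * Real.exp (-(t/2) * μ^2)))
    (((integrable_abs_pow_gauss (by positivity) n).const_mul _))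
    (((continuous_gKer t x).mul (by fun_prop)).aestronglyMeasurable)
    (Filter.Eventually.of_forall fun μ => ?_)
  rw [norm_mul, norm_gKer t x μ ht.ne', norm_pow, Complex.norm_real, Real.norm_eq_abs]
  rw [show x^2/(2*t) - t*μ^2/2 = x^2/(2*t) + (-(t/2)*μ^2) by ring, Real.exp_add]
  ring_nf
  exact le_refl _

lemma integral_gKer (t x : ℝ) (ht : 0 < t) :
    ∫ μ : ℝ, gKer t x μ = (Real.sqrt (2*Real.pi*t) : ℂ) / t := by
  have h1 : ∀ μ : ℝ, gKer t x μ =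
      Complex.exp ((-(t:ℂ)/2) * (μ:ℂ)^2 + (-Complex.I * (x:ℂ)) * (μ:ℂ) + ((x^2/(2*t) : ℝ) : ℂ)) :=
    fun μ => by rw [gKer, gKer_exponent t x μ ht.ne']
  rw [MeasureTheory.integral_congr_ae (Filter.Eventually.of_forall h1)]
  rw [integral_cexp_quadratic (show (-(t:ℂ)/2).re < 0 by simp; linarith)]
  have h2 : ((x^2/(2*t) : ℝ) : ℂ) - (-Complex.I * (x:ℂ))^2 / (4 * (-(t:ℂ)/2)) = 0 := by
    have ht' : (t:ℂ) ≠ 0 := Complex.ofReal_ne_zero.2 ht.ne'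
    have e1 : ((-Complex.I * (x:ℂ))^2 : ℂ) = -(x:ℂ)^2 := by
      linear_combination (x:ℂ)^2 * Complex.I_sq
    rw [e1]
    push_cast
    field_simp
    ring
  rw [h2, Complex.exp_zero, mul_one]
  have h3 : (Real.pi : ℂ) / -(-(t:ℂ)/2) = ((2*Real.pi/t : ℝ) : ℂ) := by
    push_cast; field_simp
  rw [h3]
  rw [show (1/2 : ℂ) = ((1/2 : ℝ) : ℂ) by norm_num]
  rw [← Complex.ofReal_cpow (by positivity)]
  rw [← Real.sqrt_eq_rpow]
  have h4 : Real.sqrt (2*Real.pi/t) = Real.sqrt (2*Real.pi*t)/t := by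
    rw [eq_div_iff ht.ne']
    calc Real.sqrt (2*Real.pi/t) * t = Real.sqrt (2*Real.pi/t) * Real.sqrt (t^2) := by
          rw [Real.sqrt_sq ht.le]
      _ = Real.sqrt ((2*Real.pi/t) * t^2) := (Real.sqrt_mul (by positivity) _).symm
      _ = Real.sqrt (2*Real.pi*t) := by rw [show (2*Real.pi/t) * t^2 = 2*Real.pi*t by field_simp]
  rw [h4]
  push_cast
  ring

lemma hasDerivAt_gKer_pow (t x : ℝ) (ht : 0 < t) (n : ℕ) (μ : ℝ) :
    HasDerivAt (fun μ : ℝ => (μ:ℂ)^n * gKer t x μ)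
      ((n:ℂ) * (μ:ℂ)^(n-1) * gKer t x μ
        + (μ:ℂ)^n * (gKer t x μ * (-Complex.I*(x:ℂ) - (t:ℂ)*(μ:ℂ)))) μ := by
  have ht' : (t:ℂ) ≠ 0 := Complex.ofReal_ne_zero.2 ht.ne'
  have hw : HasDerivAt (fun z : ℂ => -Complex.I*(x:ℂ) - (t:ℂ)*z) (-(t:ℂ)) (μ:ℂ) := by
    simpa using (((hasDerivAt_id (μ:ℂ)).const_mul (t:ℂ)).const_sub (-Complex.I*(x:ℂ)))
  have hg : HasDerivAt (fun z : ℂ => -(-Complex.I*(x:ℂ) - (t:ℂ)*z)^2/(2*(t:ℂ)))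
      (-((2:ℕ) * (-Complex.I*(x:ℂ) - (t:ℂ)*(μ:ℂ))^(2-1) * (-(t:ℂ)))/(2*(t:ℂ))) (μ:ℂ) :=
    ((hw.pow 2).neg).div_const _
  have hexp := hg.cexp
  have hmul := (hasDerivAt_pow n (μ:ℂ)).mul hexp
  have := hmul.comp_ofReal
  convert this using 1
  show _ = (n:ℂ) * (μ:ℂ)^(n-1) * Complex.exp _ + (μ:ℂ)^n * (Complex.exp _ * _)
  rw [show (-((2:ℕ) * (-Complex.I*(x:ℂ) - (t:ℂ)*(μ:ℂ))^(2-1) * (-(t:ℂ)))/(2*(t:ℂ)))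
      = (-Complex.I*(x:ℂ) - (t:ℂ)*(μ:ℂ)) by push_cast; field_simp]
  rfl
  rfl

lemma gKer_rec (t x : ℝ) (ht : 0 < t) (n : ℕ) :
    (t:ℂ) * (∫ μ : ℝ, gKer t x μ * (μ:ℂ)^(n+1)) =
      (n:ℂ) * (∫ μ : ℝ, gKer t x μ * (μ:ℂ)^(n-1))
        - Complex.I*(x:ℂ) * (∫ μ : ℝ, gKer t x μ * (μ:ℂ)^n) := by
  have hint := fun k => integrable_gKer_pow t x ht k
  have hDint : Integrable (fun μ : ℝ =>
      ((n:ℂ) * (μ:ℂ)^(n-1) * gKer t x μ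
        + (μ:ℂ)^n * (gKer t x μ * (-Complex.I*(x:ℂ) - (t:ℂ)*(μ:ℂ))))) := by
    have : Integrable (fun μ : ℝ => (n:ℂ) * (gKer t x μ * (μ:ℂ)^(n-1))
        + ((-Complex.I*(x:ℂ)) * (gKer t x μ * (μ:ℂ)^n)
          + (-(t:ℂ)) * (gKer t x μ * (μ:ℂ)^(n+1)))) :=
      ((hint (n-1)).const_mul _).add (((hint n).const_mul _).add ((hint (n+1)).const_mul _))
    refine this.congr (Filter.Eventually.of_forall fun μ => ?_)
    push_cast
    ring
  have h0 : (∫ μ : ℝ, ((n:ℂ) * (μ:ℂ)^(n-1) * gKer t x μ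
      + (μ:ℂ)^n * (gKer t x μ * (-Complex.I*(x:ℂ) - (t:ℂ)*(μ:ℂ))))) = 0 := by
    refine integral_eq_zero_of_hasDerivAt_of_integrable
      (fun μ => hasDerivAt_gKer_pow t x ht n μ) hDint ?_
    exact ((hint n).congr (Filter.Eventually.of_forall fun μ => by ring))
  have hB : Integrable (fun μ : ℝ => (-Complex.I*(x:ℂ)) * (gKer t x μ * (μ:ℂ)^n)
      + (-(t:ℂ)) * (gKer t x μ * (μ:ℂ)^(n+1))) :=
    ((hint n).const_mul _).add ((hint (n+1)).const_mul _)
  have e1 : (∫ μ : ℝ, ((n:ℂ) * (μ:ℂ)^(n-1) * gKer t x μ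
      + (μ:ℂ)^n * (gKer t x μ * (-Complex.I*(x:ℂ) - (t:ℂ)*(μ:ℂ)))))
      = ∫ μ : ℝ, ((n:ℂ) * (gKer t x μ * (μ:ℂ)^(n-1))
        + ((-Complex.I*(x:ℂ)) * (gKer t x μ * (μ:ℂ)^n)
          + (-(t:ℂ)) * (gKer t x μ * (μ:ℂ)^(n+1)))) :=
    integral_congr_ae (Filter.Eventually.of_forall fun μ => by push_cast; ring)
  rw [e1, integral_add ((hint (n-1)).const_mul _) hB,
    integral_add ((hint n).const_mul _) ((hint (n+1)).const_mul _),
    integral_const_mul, integral_const_mul, integral_const_mul] at h0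
  linear_combination -h0

noncomputable def bpoly : ℕ → ℝ → ℝ → ℂ
  | 0, _, _ => 1
  | 1, s, _ => -Complex.I * s
  | (n+2), s, τ => -Complex.I * s * bpoly (n+1) s τ + ((n:ℝ)+1) * (τ:ℂ) * bpoly n s τ

lemma bpoly_continuous : ∀ n, Continuous (fun p : ℝ × ℝ => bpoly n p.1 p.2) := by
  have key : ∀ n, Continuous (fun p : ℝ × ℝ => bpoly n p.1 p.2) ∧
      Continuous (fun p : ℝ × ℝ => bpoly (n+1) p.1 p.2) := by
    intro n
    induction n with
    | zero =>
      constructor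
      · simpa [bpoly] using continuous_const
      · show Continuous fun p : ℝ × ℝ => -Complex.I * (p.1:ℂ)
        fun_prop
    | succ n ih =>
      refine ⟨ih.2, ?_⟩
      show Continuous fun p : ℝ × ℝ =>
        -Complex.I * (p.1:ℂ) * bpoly (n+1) p.1 p.2 + ((n:ℝ)+1) * ((p.2:ℝ):ℂ) * bpoly n p.1 p.2
      exact ((by fun_prop : Continuous fun p : ℝ × ℝ => -Complex.I * (p.1:ℂ)).mul ih.2).add
        (((by fun_prop : Continuous fun p : ℝ × ℝ => (((n:ℝ):ℂ)+1) * ((p.2:ℝ):ℂ))).mul ih.1)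
  exact fun n => (key n).1

lemma bpoly_zero_right : ∀ n (s : ℝ), bpoly n s 0 = (-Complex.I * s)^n := by
  have key : ∀ n (s : ℝ), bpoly n s 0 = (-Complex.I * s)^n ∧
      bpoly (n+1) s 0 = (-Complex.I * s)^(n+1) := by
    intro n
    induction n with
    | zero => intro s; constructor <;> simp [bpoly]
    | succ n ih =>
      intro s
      refine ⟨(ih s).2, ?_⟩
      show -Complex.I * s * bpoly (n+1) s 0 + ((n:ℝ)+1) * ((0:ℝ):ℂ) * bpoly n s 0 = _
      rw [(ih s).2]
      push_cast
      ring
  exact fun n s => (key n s).1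

lemma t_mul_AInt (t s : ℝ) (ht : 0 < t) :
    ∀ n, (t:ℂ) * (∫ μ : ℝ, gKer t (t*s) μ * (μ:ℂ)^n)
      = bpoly n s (1/t) * (Real.sqrt (2*Real.pi*t) : ℂ) := by
  have ht' : (t:ℂ) ≠ 0 := Complex.ofReal_ne_zero.2 ht.ne'
  have h0 : (t:ℂ) * (∫ μ : ℝ, gKer t (t*s) μ * (μ:ℂ)^0)
      = bpoly 0 s (1/t) * (Real.sqrt (2*Real.pi*t) : ℂ) := by
    simp only [pow_zero, mul_one, bpoly]
    rw [integral_gKer t (t*s) ht]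
    field_simp
  have h1 : (t:ℂ) * (∫ μ : ℝ, gKer t (t*s) μ * (μ:ℂ)^1)
      = bpoly 1 s (1/t) * (Real.sqrt (2*Real.pi*t) : ℂ) := by
    have hr := gKer_rec t (t*s) ht 0
    simp only [Nat.zero_sub, Nat.cast_zero, zero_mul, zero_sub, pow_zero] at hr
    rw [hr]
    show -(Complex.I * ((t*s:ℝ):ℂ) * _) = -Complex.I * (s:ℂ) * _
    rw [show (∫ μ : ℝ, gKer t (t*s) μ * (1:ℂ)) = ∫ μ : ℝ, gKer t (t*s) μ by simp,
      integral_gKer t (t*s) ht]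
    push_cast
    field_simp
  have key : ∀ n, ((t:ℂ) * (∫ μ : ℝ, gKer t (t*s) μ * (μ:ℂ)^n)
        = bpoly n s (1/t) * (Real.sqrt (2*Real.pi*t) : ℂ))
      ∧ ((t:ℂ) * (∫ μ : ℝ, gKer t (t*s) μ * (μ:ℂ)^(n+1))
        = bpoly (n+1) s (1/t) * (Real.sqrt (2*Real.pi*t) : ℂ)) := by
    intro n
    induction n with
    | zero => exact ⟨h0, h1⟩
    | succ n ih =>
      refine ⟨ih.2, ?_⟩
      have hr := gKer_rec t (t*s) ht (n+1)
      simp only [Nat.add_sub_cancel] at hr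
      have hb : bpoly (n+2) s (1/t)
          = -Complex.I * s * bpoly (n+1) s (1/t) + ((n:ℝ)+1) * ((1/t : ℝ):ℂ) * bpoly n s (1/t) :=
        rfl
      have ih1 := ih.1
      have ih2 := ih.2
      rw [hb]
      push_cast at hr ⊢
      linear_combination (norm := (field_simp; ring)) hr + ((n:ℂ)+1)/t * ih1
        - Complex.I * (s:ℂ) * ih2
  exact fun n => (key n).1

noncomputable def driftPoly (N : ℕ) (ν : Fin N → ℝ) (j : Fin N) : Polynomial ℂ :=
  Polynomial.C ((∏ k ∈ Finset.univ.filter (fun k => k ≠ j), ((ν k : ℂ) - (ν j : ℂ)))⁻¹) *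
    ∏ k ∈ Finset.univ.filter (fun k => k ≠ j),
      (Polynomial.C (ν k : ℂ) - Polynomial.C Complex.I * Polynomial.X)

noncomputable def Gfun (N : ℕ) (ν : Fin N → ℝ) (j : Fin N) (s τ : ℝ) : ℂ :=
  ∑ m ∈ Finset.range N, (driftPoly N ν j).coeff m * bpoly m s τ

lemma driftPoly_natDegree_lt (N : ℕ) (hN : 1 ≤ N) (ν : Fin N → ℝ) (j : Fin N) :
    (driftPoly N ν j).natDegree < N := by
  have h1 : (∏ k ∈ Finset.univ.filter (fun k => k ≠ j),
      (Polynomial.C (ν k : ℂ) - Polynomial.C Complex.I * Polynomial.X)).natDegree ≤ N - 1 := by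
    refine le_trans (Polynomial.natDegree_prod_le _ _) ?_
    have hcard : (Finset.univ.filter (fun k => k ≠ j)).card = N - 1 := by
      rw [Finset.filter_ne', Finset.card_erase_of_mem (Finset.mem_univ j), Finset.card_univ,
        Fintype.card_fin]
    calc ∑ k ∈ Finset.univ.filter (fun k => k ≠ j),
          (Polynomial.C (ν k : ℂ) - Polynomial.C Complex.I * Polynomial.X).natDegree
        ≤ ∑ _k ∈ Finset.univ.filter (fun k => k ≠ j), 1 := by
          refine Finset.sum_le_sum fun k _ => ?_
          refine le_trans (Polynomial.natDegree_sub_le _ _) ?_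
          simp [Polynomial.natDegree_C]
      _ = N - 1 := by rw [Finset.sum_const, smul_eq_mul, mul_one, hcard]
  calc (driftPoly N ν j).natDegree ≤ _ := Polynomial.natDegree_C_mul_le _ _
    _ ≤ N - 1 := h1
    _ < N := by omega

lemma driftPoly_prod_eq (N : ℕ) (ν : Fin N → ℝ) (hinj : Function.Injective ν) (j : Fin N)
    (μ : ℝ) :
    (∏ k ∈ Finset.univ.filter (fun k => k ≠ j),
      (1 - (Complex.I * (μ:ℂ) - ((ν j : ℝ):ℂ)) / (((ν k : ℝ):ℂ) - ((ν j : ℝ):ℂ))))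
      = (driftPoly N ν j).eval (μ:ℂ) := by
  rw [driftPoly, Polynomial.eval_mul, Polynomial.eval_C, Polynomial.eval_prod]
  have hfac : ∀ k ∈ Finset.univ.filter (fun k => k ≠ j),
      (1 - (Complex.I * (μ:ℂ) - ((ν j : ℝ):ℂ)) / (((ν k : ℝ):ℂ) - ((ν j : ℝ):ℂ)))
        = (((ν k : ℝ):ℂ) - Complex.I * (μ:ℂ)) / (((ν k : ℝ):ℂ) - ((ν j : ℝ):ℂ)) := by
    intro k hk
    have hkj : k ≠ j := by simpa using hk
    have hne : (((ν k : ℝ):ℂ) - ((ν j : ℝ):ℂ)) ≠ 0 := by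
      rw [sub_ne_zero]
      exact_mod_cast fun h => hkj (hinj (by exact_mod_cast h))
    field_simp
    ring
  rw [Finset.prod_congr rfl hfac, Finset.prod_div_distrib]
  have heval : ∀ k ∈ Finset.univ.filter (fun k => k ≠ j),
      (Polynomial.C ((ν k : ℝ):ℂ) - Polynomial.C Complex.I * Polynomial.X).eval (μ:ℂ)
        = ((ν k : ℝ):ℂ) - Complex.I * (μ:ℂ) := by
    intro k _; simp
  rw [Finset.prod_congr rfl heval, div_eq_inv_mul]

lemma Gfun_continuous (N : ℕ) (ν : Fin N → ℝ) (j : Fin N) :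
    Continuous (fun p : ℝ × ℝ => Gfun N ν j p.1 p.2) := by
  refine continuous_finset_sum _ fun m _ => ?_
  exact continuous_const.mul (bpoly_continuous m)

lemma Gfun_at_drift (N : ℕ) (hN : 1 ≤ N) (ν : Fin N → ℝ) (hinj : Function.Injective ν)
    (j : Fin N) : Gfun N ν j (ν j) 0 = 1 := by
  have hdeg := driftPoly_natDegree_lt N hN ν j
  have h1 : Gfun N ν j (ν j) 0 = (driftPoly N ν j).eval (-Complex.I * ((ν j : ℝ):ℂ)) := by
    rw [Polynomial.eval_eq_sum_range' hdeg, Gfun]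
    refine Finset.sum_congr rfl fun m _ => ?_
    rw [bpoly_zero_right]
  rw [h1, driftPoly, Polynomial.eval_mul, Polynomial.eval_C, Polynomial.eval_prod]
  have heval : ∀ k ∈ Finset.univ.filter (fun k => k ≠ j),
      (Polynomial.C ((ν k : ℝ):ℂ) - Polynomial.C Complex.I * Polynomial.X).eval
          (-Complex.I * ((ν j : ℝ):ℂ))
        = ((ν k : ℝ):ℂ) - ((ν j : ℝ):ℂ) := by
    intro k _
    simp only [Polynomial.eval_sub, Polynomial.eval_C, Polynomial.eval_mul, Polynomial.eval_X]
    linear_combination (((ν j : ℝ)):ℂ) * Complex.I_sq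
  rw [Finset.prod_congr rfl heval]
  have hne : (∏ k ∈ Finset.univ.filter (fun k => k ≠ j), (((ν k : ℝ):ℂ) - ((ν j : ℝ):ℂ))) ≠ 0 := by
    refine Finset.prod_ne_zero_iff.2 fun k hk => ?_
    have hkj : k ≠ j := by simpa using hk
    rw [sub_ne_zero]
    exact_mod_cast fun h => hkj (hinj (by exact_mod_cast h))
  exact inv_mul_cancel₀ hne

lemma t_mul_inner (N : ℕ) (hN : 1 ≤ N) (ν : Fin N → ℝ) (hinj : Function.Injective ν)
    (j : Fin N) (t s : ℝ) (ht : 0 < t) :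
    (t:ℂ) * (∫ μ : ℝ, gaussC t (-Complex.I * ((t*s : ℝ):ℂ)) ((t:ℂ) * (μ:ℂ)) *
      ∏ k ∈ Finset.univ.filter (fun k => k ≠ j),
        (1 - (Complex.I * (μ:ℂ) - ((ν j : ℝ):ℂ)) / (((ν k : ℝ):ℂ) - ((ν j : ℝ):ℂ))))
      = Gfun N ν j s (1/t) := by
  have hdeg := driftPoly_natDegree_lt N hN ν j
  have hsqrt : (Real.sqrt (2*Real.pi*t) : ℂ) ≠ 0 := by
    rw [Complex.ofReal_ne_zero]
    positivity
  have hpt : ∀ μ : ℝ, gaussC t (-Complex.I * ((t*s : ℝ):ℂ)) ((t:ℂ) * (μ:ℂ)) *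
      (∏ k ∈ Finset.univ.filter (fun k => k ≠ j),
        (1 - (Complex.I * (μ:ℂ) - ((ν j : ℝ):ℂ)) / (((ν k : ℝ):ℂ) - ((ν j : ℝ):ℂ))))
      = (Real.sqrt (2*Real.pi*t) : ℂ)⁻¹ *
          ∑ m ∈ Finset.range N, (driftPoly N ν j).coeff m * (gKer t (t*s) μ * (μ:ℂ)^m) := by
    intro μ
    have e1 : gaussC t (-Complex.I * ((t*s : ℝ):ℂ)) ((t:ℂ) * (μ:ℂ))
        = gKer t (t*s) μ / (Real.sqrt (2*Real.pi*t) : ℂ) := rfl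
    rw [e1, driftPoly_prod_eq N ν hinj j μ, Polynomial.eval_eq_sum_range' hdeg, Finset.mul_sum,
      Finset.mul_sum]
    refine Finset.sum_congr rfl fun m _ => ?_
    field_simp
  rw [MeasureTheory.integral_congr_ae (Filter.Eventually.of_forall hpt), integral_const_mul,
    integral_finset_sum _ (fun m _ => (integrable_gKer_pow t (t*s) ht m).const_mul _)]
  rw [Gfun]
  have : ∀ m ∈ Finset.range N,
      (∫ μ : ℝ, (driftPoly N ν j).coeff m * (gKer t (t*s) μ * (μ:ℂ)^m))
        = (driftPoly N ν j).coeff m * ((bpoly m s (1/t) * (Real.sqrt (2*Real.pi*t) : ℂ))/t) := by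
    intro m _
    rw [integral_const_mul, ← t_mul_AInt t s ht m]
    have ht' : (t:ℂ) ≠ 0 := Complex.ofReal_ne_zero.2 ht.ne'
    field_simp
  rw [Finset.sum_congr rfl this]
  have ht' : (t:ℂ) ≠ 0 := Complex.ofReal_ne_zero.2 ht.ne'
  rw [Finset.mul_sum, Finset.mul_sum]
  refine Finset.sum_congr rfl fun m _ => ?_
  have h2 : (Real.sqrt 2 : ℂ) ≠ 0 := Complex.ofReal_ne_zero.2 (by positivity)
  have hπ : (Real.sqrt Real.pi : ℂ) ≠ 0 :=
    Complex.ofReal_ne_zero.2 (by positivity)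
  have hst : (Real.sqrt t : ℂ) ≠ 0 := Complex.ofReal_ne_zero.2 (by positivity)
  field_simp

lemma tendsto_sqrt_atTop' : Tendsto Real.sqrt atTop atTop :=
  (tendsto_rpow_atTop (by norm_num : (0:ℝ) < 1/2)).congr
    (fun x => (Real.sqrt_eq_rpow x).symm)

lemma tendsto_gauss_weight (N : ℕ) (hN : 1 ≤ N) (ν : Fin N → ℝ)
    (hinj : Function.Injective ν) (j : Fin N)
    (f : ℝ → ℝ) (hf : Continuous f) (hsupp : HasCompactSupport f) :
    Tendsto (fun t : ℝ => ∫ s : ℝ, (f s : ℂ) *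
        ((Real.sqrt (t/(2*Real.pi)) * Real.exp (-(t*(s - ν j)^2)/2) : ℝ) : ℂ) *
          Gfun N ν j s (1/t))
      atTop (nhds ((f (ν j) : ℝ) : ℂ)) := by
  set H : ℝ → ℝ → ℂ := fun t u => (f (ν j + u / Real.sqrt t) : ℂ) *
    ((Real.exp (-(u^2)/2) / Real.sqrt (2*Real.pi) : ℝ) : ℂ) *
      Gfun N ν j (ν j + u / Real.sqrt t) (1/t) with hH
  -- Step A: change of variables
  have stepA : ∀ t : ℝ, 1 ≤ t →
      (∫ s : ℝ, (f s : ℂ) *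
        ((Real.sqrt (t/(2*Real.pi)) * Real.exp (-(t*(s - ν j)^2)/2) : ℝ) : ℂ) *
          Gfun N ν j s (1/t)) = ∫ u : ℝ, H t u := by
    intro t ht1
    have ht : (0:ℝ) < t := lt_of_lt_of_le one_pos ht1
    have hst : (0:ℝ) < Real.sqrt t := Real.sqrt_pos.2 ht
    set φ : ℝ → ℂ := fun s => (f s : ℂ) *
      ((Real.sqrt (t/(2*Real.pi)) * Real.exp (-(t*(s - ν j)^2)/2) : ℝ) : ℂ) *
        Gfun N ν j s (1/t) with hφ
    have hpt : ∀ u : ℝ, H t u = (Real.sqrt t)⁻¹ • φ (ν j + (Real.sqrt t)⁻¹ * u) := by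
      intro u
      rw [hH, hφ]
      simp only
      have e1 : ν j + (Real.sqrt t)⁻¹ * u = ν j + u / Real.sqrt t := by ring
      rw [e1]
      have e2 : t * ((ν j + u / Real.sqrt t) - ν j)^2 = u^2 := by
        rw [add_sub_cancel_left, div_pow, Real.sq_sqrt ht.le]
        field_simp
      rw [e2]
      have e3 : (Real.sqrt t)⁻¹ * Real.sqrt (t/(2*Real.pi)) = (Real.sqrt (2*Real.pi))⁻¹ := by
        rw [Real.sqrt_div ht.le]
        field_simp
      rw [div_eq_mul_inv (Real.exp (-(u^2)/2)) (Real.sqrt (2*Real.pi)), ← e3,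
        Complex.real_smul]
      push_cast
      ring
    calc (∫ s : ℝ, φ s)
        = ∫ v : ℝ, φ (ν j + v) := (integral_add_left_eq_self φ (ν j)).symm
      _ = ((Real.sqrt t)⁻¹ • ((Real.sqrt t) • ∫ v : ℝ, φ (ν j + v))) := by
          rw [smul_smul, inv_mul_cancel₀ hst.ne', one_smul]
      _ = ((Real.sqrt t)⁻¹ • (|((Real.sqrt t)⁻¹)⁻¹| • ∫ v : ℝ, φ (ν j + v))) := by
          rw [inv_inv, abs_of_pos hst]
      _ = ((Real.sqrt t)⁻¹ • ∫ u : ℝ, φ (ν j + (Real.sqrt t)⁻¹ * u)) := by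
          rw [MeasureTheory.Measure.integral_comp_mul_left (fun v => φ (ν j + v))
            ((Real.sqrt t)⁻¹)]
      _ = ∫ u : ℝ, (Real.sqrt t)⁻¹ • φ (ν j + (Real.sqrt t)⁻¹ * u) := by
          rw [integral_smul]
      _ = ∫ u : ℝ, H t u := by
          refine integral_congr_ae (Filter.Eventually.of_forall fun u => ?_)
          rw [hpt u]
  -- Step B: dominated convergence
  obtain ⟨R, hR⟩ := hsupp.isBounded.subset_closedBall 0
  obtain ⟨Cf, hCf⟩ := hsupp.exists_bound_of_continuous hf
  set K : Set (ℝ × ℝ) := Set.Icc (-R) R ×ˢ Set.Icc (0:ℝ) 1 with hK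
  have hKc : IsCompact K := isCompact_Icc.prod isCompact_Icc
  obtain ⟨M, hM⟩ := hKc.exists_bound_of_continuousOn (Gfun_continuous N ν j).continuousOn
  set C : ℝ := max Cf 0 * max M 0 with hC
  have hC0 : 0 ≤ C := mul_nonneg (le_max_right _ _) (le_max_right _ _)
  set bound : ℝ → ℝ := fun u => C / Real.sqrt (2*Real.pi) * Real.exp (-(1/2) * u^2) with hbd
  have hbound_int : Integrable bound :=
    (integrable_exp_neg_mul_sq (by norm_num : (0:ℝ) < 1/2)).const_mul _
  have hmeas : ∀ᶠ t in (atTop : Filter ℝ), AEStronglyMeasurable (H t) volume := by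
    refine Filter.Eventually.of_forall fun t => Continuous.aestronglyMeasurable ?_
    have harg : Continuous (fun u : ℝ => ν j + u / Real.sqrt t) :=
      continuous_const.add (continuous_id.div_const _)
    refine ((Complex.continuous_ofReal.comp (hf.comp harg)).mul
      (Complex.continuous_ofReal.comp
        (by fun_prop : Continuous fun u : ℝ => Real.exp (-(u^2)/2) / Real.sqrt (2*Real.pi)))).mul ?_
    exact (Gfun_continuous N ν j).comp (harg.prodMk continuous_const)
  have h_bound : ∀ᶠ t in (atTop : Filter ℝ), ∀ᵐ u : ℝ, ‖H t u‖ ≤ bound u := by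
    filter_upwards [eventually_ge_atTop (1:ℝ)] with t ht1
    refine Filter.Eventually.of_forall fun u => ?_
    have ht : (0:ℝ) < t := lt_of_lt_of_le one_pos ht1
    rw [hH]
    simp only
    by_cases hz : f (ν j + u / Real.sqrt t) = 0
    · rw [hz]
      simp only [Complex.ofReal_zero, zero_mul, norm_zero]
      positivity
    · set s' := ν j + u / Real.sqrt t with hs'
      have hs'mem : s' ∈ Set.Icc (-R) R := by
        have : s' ∈ tsupport f := subset_closure (by exact hz)
        have := hR this
        rw [Real.closedBall_eq_Icc] at this
        simpa using this
      have hτ : (1/t) ∈ Set.Icc (0:ℝ) 1 := by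
        constructor
        · positivity
        · rw [div_le_one ht]; linarith
      have hGb : ‖Gfun N ν j s' (1/t)‖ ≤ max M 0 := by
        have := hM (s', 1/t) (Set.mk_mem_prod hs'mem hτ)
        exact le_trans this (le_max_left _ _)
      rw [norm_mul, norm_mul]
      have h1 : ‖(f s' : ℂ)‖ ≤ max Cf 0 :=
        le_trans (by rw [Complex.norm_real]; exact hCf s') (le_max_left _ _)
      have h2 : ‖((Real.exp (-(u^2)/2) / Real.sqrt (2*Real.pi) : ℝ) : ℂ)‖
          = Real.exp (-(1/2) * u^2) / Real.sqrt (2*Real.pi) := by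
        rw [Complex.norm_real, Real.norm_eq_abs, _root_.abs_of_nonneg (by positivity)]
        rw [show -(u^2)/2 = -(1/2) * u^2 by ring]
      rw [h2, hbd]
      calc ‖(f s' : ℂ)‖ * (Real.exp (-(1/2) * u^2) / Real.sqrt (2*Real.pi)) *
            ‖Gfun N ν j s' (1/t)‖
          ≤ max Cf 0 * (Real.exp (-(1/2) * u^2) / Real.sqrt (2*Real.pi)) * max M 0 := by
            refine mul_le_mul (mul_le_mul_of_nonneg_right h1 (by positivity)) hGb
              (norm_nonneg _) (by positivity)
        _ = C / Real.sqrt (2*Real.pi) * Real.exp (-(1/2) * u^2) := by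
            rw [hC]; ring
  have h_lim : ∀ᵐ u : ℝ, Tendsto (fun t => H t u) atTop
      (nhds ((f (ν j) : ℂ) * ((Real.exp (-(u^2)/2) / Real.sqrt (2*Real.pi) : ℝ) : ℂ) * 1)) := by
    refine Filter.Eventually.of_forall fun u => ?_
    have harg : Tendsto (fun t : ℝ => ν j + u / Real.sqrt t) atTop (nhds (ν j)) := by
      have h2 : Tendsto (fun t : ℝ => u / Real.sqrt t) atTop (nhds 0) := by
        simp only [div_eq_mul_inv]
        simpa using
          (tendsto_inv_atTop_zero.comp tendsto_sqrt_atTop').const_mul u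
      simpa using tendsto_const_nhds.add h2
    have hτ : Tendsto (fun t : ℝ => 1/t) atTop (nhds 0) := by
      simpa [one_div] using (tendsto_inv_atTop_zero : Tendsto (fun t:ℝ => t⁻¹) atTop (nhds 0))
    have hG : Tendsto (fun t : ℝ => Gfun N ν j (ν j + u / Real.sqrt t) (1/t)) atTop
        (nhds 1) := by
      have := ((Gfun_continuous N ν j).tendsto (ν j, 0)).comp (harg.prodMk_nhds hτ)
      rwa [Gfun_at_drift N hN ν hinj j] at this
    have hfc : Tendsto (fun t : ℝ => (f (ν j + u / Real.sqrt t) : ℂ)) atTop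
        (nhds ((f (ν j) : ℂ))) :=
      (Complex.continuous_ofReal.tendsto _).comp ((hf.tendsto _).comp harg)
    exact (hfc.mul tendsto_const_nhds).mul hG
  have hB := tendsto_integral_filter_of_dominated_convergence bound hmeas h_bound
    hbound_int h_lim
  have hval : (∫ u : ℝ, (f (ν j) : ℂ) *
      ((Real.exp (-(u^2)/2) / Real.sqrt (2*Real.pi) : ℝ) : ℂ) * 1) = ((f (ν j) : ℝ) : ℂ) := by
    simp only [mul_one]
    rw [integral_const_mul]
    have hcast : (∫ u : ℝ, ((Real.exp (-(u^2)/2) / Real.sqrt (2*Real.pi) : ℝ) : ℂ))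
        = (((∫ u : ℝ, Real.exp (-(u^2)/2) / Real.sqrt (2*Real.pi)) : ℝ) : ℂ) := by
      exact integral_ofReal
    rw [hcast]
    have : (∫ u : ℝ, Real.exp (-(u^2)/2) / Real.sqrt (2*Real.pi)) = 1 := by
      rw [integral_div]
      rw [show (fun u : ℝ => Real.exp (-(u^2)/2)) = fun u : ℝ => Real.exp (-(1/2) * u^2) by
        funext u; rw [show -(u^2)/2 = -(1/2) * u^2 by ring]]
      rw [integral_gaussian]
      rw [show Real.pi / (1/2) = 2 * Real.pi by ring]
      exact div_self (by positivity)
    rw [this]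
    simp
  rw [hval] at hB
  exact Tendsto.congr' (by filter_upwards [eventually_ge_atTop (1:ℝ)] with t ht
    using (stepA t ht).symm) hB

lemma t_mul_gaussC (t s m : ℝ) (ht : 0 < t) :
    (t:ℂ) * gaussC t ((t*s : ℝ):ℂ) ((t:ℂ) * (m:ℂ))
      = ((Real.sqrt (t/(2*Real.pi)) * Real.exp (-(t*(s - m)^2)/2) : ℝ) : ℂ) := by
  have ht' : (t:ℂ) ≠ 0 := Complex.ofReal_ne_zero.2 ht.ne'
  have e1 : ((t*s : ℝ):ℂ) - (t:ℂ)*(m:ℂ) = ((t*(s - m) : ℝ):ℂ) := by push_cast; ring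
  have e2 : -(((t*(s - m) : ℝ):ℂ))^2/(2*(t:ℂ)) = ((-(t*(s - m)^2)/2 : ℝ):ℂ) := by
    push_cast
    field_simp
  rw [gaussC, e1, e2, ← Complex.ofReal_exp]
  have e3 : Real.sqrt (t/(2*Real.pi)) = t / Real.sqrt (2*Real.pi*t) := by
    rw [show t/(2*Real.pi) = t^2/(2*Real.pi*t) by field_simp,
      Real.sqrt_div (by positivity), Real.sqrt_sq ht.le]
  rw [e3]
  have hs : (Real.sqrt (2*Real.pi*t) : ℂ) ≠ 0 := Complex.ofReal_ne_zero.2 (by positivity)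
  push_cast
  field_simp

lemma keq_eval (N : ℕ) (hN : 1 ≤ N) (ν : Fin N → ℝ) (hinj : Function.Injective ν)
    (t s : ℝ) (ht : 0 < t) :
    (t:ℂ) * Keq N ν t (t*s) (t*s)
      = ∑ j, ((Real.sqrt (t/(2*Real.pi)) * Real.exp (-(t*(s - ν j)^2)/2) : ℝ) : ℂ) *
          Gfun N ν j s (1/t) := by
  rw [Keq, ← mul_assoc, mul_comm (t:ℂ) (t:ℂ), mul_assoc, Finset.mul_sum, Finset.mul_sum]
  refine Finset.sum_congr rfl fun j _ => ?_
  calc (t:ℂ) * ((t:ℂ) * (gaussC t ((t*s:ℝ):ℂ) ((t:ℂ) * ((ν j : ℝ):ℂ)) *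
        ∫ μ' : ℝ, gaussC t (-Complex.I * ((t*s:ℝ):ℂ)) ((t:ℂ) * (μ':ℂ)) *
          ∏ k ∈ Finset.univ.filter (fun k => k ≠ j),
            (1 - (Complex.I * (μ':ℂ) - ((ν j : ℝ):ℂ)) / (((ν k : ℝ):ℂ) - ((ν j : ℝ):ℂ)))))
      = ((t:ℂ) * gaussC t ((t*s:ℝ):ℂ) ((t:ℂ) * ((ν j : ℝ):ℂ))) *
        ((t:ℂ) * ∫ μ' : ℝ, gaussC t (-Complex.I * ((t*s:ℝ):ℂ)) ((t:ℂ) * (μ':ℂ)) *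
          ∏ k ∈ Finset.univ.filter (fun k => k ≠ j),
            (1 - (Complex.I * (μ':ℂ) - ((ν j : ℝ):ℂ)) / (((ν k : ℝ):ℂ) - ((ν j : ℝ):ℂ)))) := by
        ring
    _ = _ := by
        rw [t_mul_gaussC t s (ν j) ht, t_mul_inner N hN ν hinj j t s ht]

/-- After dilatation by `1/t`, the one-point correlation measure of the
noncolliding Brownian motion with drift ν started from the origin converges
vaguely, as `t → ∞`, to the drift configuration `∑_j δ_{ν_j}`: for every
continuous compactly supported `f`,
`lim_{t→∞} ∫_ℝ f(x) t 𝐊_ν(t, tx; t, tx) dx = ∑_j f(ν_j)`. -/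
theorem dilated_one_point_tendsto_drift
    (N : ℕ) (hN : 1 ≤ N) (ν : Fin N → ℝ) (hν : StrictMono ν)
    (f : ℝ → ℝ) (hf : Continuous f) (hsupp : HasCompactSupport f) :
    Tendsto (fun t : ℝ =>
        ∫ x : ℝ, (f x : ℂ) * (t : ℂ) * Keq N ν t (t * x) (t * x))
      atTop (nhds ((∑ j, f (ν j) : ℝ) : ℂ)) := by
  have hinj := hν.injective
  have hsum : Tendsto (fun t : ℝ => ∑ j, ∫ s : ℝ, (f s : ℂ) *
      ((Real.sqrt (t/(2*Real.pi)) * Real.exp (-(t*(s - ν j)^2)/2) : ℝ) : ℂ) *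
        Gfun N ν j s (1/t)) atTop (nhds (∑ j, ((f (ν j) : ℝ) : ℂ))) :=
    tendsto_finset_sum _ (fun j _ => tendsto_gauss_weight N hN ν hinj j f hf hsupp)
  have hcast : ((∑ j, f (ν j) : ℝ) : ℂ) = ∑ j, ((f (ν j) : ℝ) : ℂ) := by push_cast; rfl
  rw [hcast]
  refine Tendsto.congr' ?_ hsum
  filter_upwards [eventually_ge_atTop (1:ℝ)] with t ht1
  have ht : (0:ℝ) < t := lt_of_lt_of_le one_pos ht1
  have hptwise : ∀ s : ℝ, (f s : ℂ) * (t : ℂ) * Keq N ν t (t * s) (t * s)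
      = ∑ j, (f s : ℂ) *
          ((Real.sqrt (t/(2*Real.pi)) * Real.exp (-(t*(s - ν j)^2)/2) : ℝ) : ℂ) *
            Gfun N ν j s (1/t) := by
    intro s
    rw [mul_assoc, keq_eval N hN ν hinj t s ht, Finset.mul_sum]
    exact Finset.sum_congr rfl fun j _ => by ring
  have hIntg : ∀ j : Fin N, Integrable (fun s : ℝ => (f s : ℂ) *
      ((Real.sqrt (t/(2*Real.pi)) * Real.exp (-(t*(s - ν j)^2)/2) : ℝ) : ℂ) *
        Gfun N ν j s (1/t)) := by
    intro j
    have hcont : Continuous (fun s : ℝ => (f s : ℂ) *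
        ((Real.sqrt (t/(2*Real.pi)) * Real.exp (-(t*(s - ν j)^2)/2) : ℝ) : ℂ) *
          Gfun N ν j s (1/t)) := by
      refine ((Complex.continuous_ofReal.comp hf).mul
        (Complex.continuous_ofReal.comp (by fun_prop))).mul ?_
      exact (Gfun_continuous N ν j).comp (continuous_id.prodMk continuous_const)
    have hcs : HasCompactSupport (fun s : ℝ => (f s : ℂ) *
        ((Real.sqrt (t/(2*Real.pi)) * Real.exp (-(t*(s - ν j)^2)/2) : ℝ) : ℂ) *
          Gfun N ν j s (1/t)) := by
      have h1 : HasCompactSupport (fun s : ℝ => ((f s : ℝ) : ℂ)) :=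
        hsupp.comp_left (g := Complex.ofReal) Complex.ofReal_zero
      have : (fun s : ℝ => (f s : ℂ) *
          ((Real.sqrt (t/(2*Real.pi)) * Real.exp (-(t*(s - ν j)^2)/2) : ℝ) : ℂ) *
            Gfun N ν j s (1/t))
          = (fun s : ℝ => ((f s : ℝ) : ℂ)) * (fun s : ℝ =>
            ((Real.sqrt (t/(2*Real.pi)) * Real.exp (-(t*(s - ν j)^2)/2) : ℝ) : ℂ) *
              Gfun N ν j s (1/t)) := by
        funext s
        simp [mul_assoc]
      rw [this]
      exact h1.mul_right
    exact hcont.integrable_of_hasCompactSupport hcs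
  have hchain : (∫ x : ℝ, (f x : ℂ) * (t : ℂ) * Keq N ν t (t * x) (t * x))
      = ∑ j, ∫ s : ℝ, (f s : ℂ) *
          ((Real.sqrt (t/(2*Real.pi)) * Real.exp (-(t*(s - ν j)^2)/2) : ℝ) : ℂ) *
            Gfun N ν j s (1/t) := by
    rw [integral_congr_ae (Filter.Eventually.of_forall hptwise)]
    exact integral_finset_sum _ (fun j _ => hIntg j)
  exact hchain.symm
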